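/- arXiv:1406.7632 — 6 statements merged into one kernel-verified Lean document; each statement's English description precedes it below -/
import Mathlib

section
/- Let K be a commutative ring, n ≥ 3, and let i be an index with 1 ≤ i ≤ n−2. Then for all units a, b of K, U_{n;i}(a)·U_{n;i+1}(a)·U_{n;i}(b) = U_{n;i+1}(b)·U_{n;i}(a)·U_{n;i+1}(a). (This is the braid-relation identity underlying the well-definedness of the Gassner invariant; for n = 3, i = 1, a = t₁, b = t₂ it says Γ(σ₁σ₂σ₁) = Γ(σ₂σ₁σ₂).) -/
/-- `U K n i t` is the `n × n` matrix over `K` (1-indexed rows/columns `1,…,n`) that equals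
the identity matrix except that its `2 × 2` block in rows `i, i+1` and columns `i, i+1`
is `((1-t, 1), (t, 0))`.  A row index `r : Fin n` corresponds to the 1-indexed row `r.val + 1`. -/
def GassnerU (K : Type*) [CommRing K] (n : ℕ) (i : ℕ) (t : K) : Matrix (Fin n) (Fin n) K :=
  Matrix.of fun r c =>
    if r.val + 1 = i ∧ c.val + 1 = i then 1 - t
    else if r.val + 1 = i ∧ c.val = i then 1
    else if r.val = i ∧ c.val + 1 = i then t
    else if r.val = i ∧ c.val = i then 0
    else if r = c then 1 else 0

lemma GassnerU_mul_apply {K : Type*} [CommRing K] {n i : ℕ} (hi : 1 ≤ i) (hin : i < n)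
    (t : K) (M : Matrix (Fin n) (Fin n) K) (r c : Fin n) :
    (GassnerU K n i t * M) r c =
      if r.val + 1 = i then (1 - t) * M ⟨i - 1, by omega⟩ c + M ⟨i, hin⟩ c
      else if r.val = i then t * M ⟨i - 1, by omega⟩ c
      else M r c := by
  rw [Matrix.mul_apply]
  by_cases h1 : r.val + 1 = i
  · rw [if_pos h1]
    have key : ∀ j : Fin n, GassnerU K n i t r j * M j c =
        (if j = (⟨i - 1, by omega⟩ : Fin n) then (1 - t) * M ⟨i - 1, by omega⟩ c else 0) +
        (if j = (⟨i, hin⟩ : Fin n) then M ⟨i, hin⟩ c else 0) := by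
      intro j
      simp only [GassnerU, Matrix.of_apply]
      split_ifs <;> subst_vars <;> first | ring1 | ((exfalso; try simp only [Fin.ext_iff, Fin.val_mk, not_and, true_implies, not_true, imp_false] at *) <;> (try omega))
    rw [Finset.sum_congr rfl fun j _ => key j, Finset.sum_add_distrib]
    simp
  · rw [if_neg h1]
    by_cases h2 : r.val = i
    · rw [if_pos h2]
      have key : ∀ j : Fin n, GassnerU K n i t r j * M j c =
          (if j = (⟨i - 1, by omega⟩ : Fin n) then t * M ⟨i - 1, by omega⟩ c else 0) := by
        intro j
        simp only [GassnerU, Matrix.of_apply]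
        split_ifs <;> subst_vars <;> first | ring1 | ((exfalso; try simp only [Fin.ext_iff, Fin.val_mk, not_and, true_implies, not_true, imp_false] at *) <;> (try omega))
      rw [Finset.sum_congr rfl fun j _ => key j]
      simp
    · rw [if_neg h2]
      have key : ∀ j : Fin n, GassnerU K n i t r j * M j c =
          (if j = r then M r c else 0) := by
        intro j
        simp only [GassnerU, Matrix.of_apply]
        split_ifs <;> subst_vars <;> first | ring1 | ((exfalso; try simp only [Fin.ext_iff, Fin.val_mk, not_and, true_implies, not_true, imp_false] at *) <;> (try omega))
      rw [Finset.sum_congr rfl fun j _ => key j]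
      simp

lemma mul_GassnerU_apply {K : Type*} [CommRing K] {n i : ℕ} (hi : 1 ≤ i) (hin : i < n)
    (t : K) (M : Matrix (Fin n) (Fin n) K) (r c : Fin n) :
    (M * GassnerU K n i t) r c =
      if c.val + 1 = i then (1 - t) * M r ⟨i - 1, by omega⟩ + t * M r ⟨i, hin⟩
      else if c.val = i then M r ⟨i - 1, by omega⟩
      else M r c := by
  rw [Matrix.mul_apply]
  by_cases h1 : c.val + 1 = i
  · rw [if_pos h1]
    have key : ∀ j : Fin n, M r j * GassnerU K n i t j c =
        (if j = (⟨i - 1, by omega⟩ : Fin n) then (1 - t) * M r ⟨i - 1, by omega⟩ else 0) +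
        (if j = (⟨i, hin⟩ : Fin n) then t * M r ⟨i, hin⟩ else 0) := by
      intro j
      simp only [GassnerU, Matrix.of_apply]
      split_ifs <;> subst_vars <;> first | ring1 | ((exfalso; try simp only [Fin.ext_iff, Fin.val_mk, not_and, true_implies, not_true, imp_false] at *) <;> (try omega))
    rw [Finset.sum_congr rfl fun j _ => key j, Finset.sum_add_distrib]
    simp
  · rw [if_neg h1]
    by_cases h2 : c.val = i
    · rw [if_pos h2]
      have key : ∀ j : Fin n, M r j * GassnerU K n i t j c =
          (if j = (⟨i - 1, by omega⟩ : Fin n) then M r ⟨i - 1, by omega⟩ else 0) := by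
        intro j
        simp only [GassnerU, Matrix.of_apply]
        split_ifs <;> subst_vars <;> first | ring1 | ((exfalso; try simp only [Fin.ext_iff, Fin.val_mk, not_and, true_implies, not_true, imp_false] at *) <;> (try omega))
      rw [Finset.sum_congr rfl fun j _ => key j]
      simp
    · rw [if_neg h2]
      have key : ∀ j : Fin n, M r j * GassnerU K n i t j c =
          (if j = c then M r c else 0) := by
        intro j
        simp only [GassnerU, Matrix.of_apply]
        split_ifs <;> subst_vars <;> first | ring1 | ((exfalso; try simp only [Fin.ext_iff, Fin.val_mk, not_and, true_implies, not_true, imp_false] at *) <;> (try omega))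
      rw [Finset.sum_congr rfl fun j _ => key j]
      simp

set_option maxHeartbeats 2000000 in
/-- For a commutative ring `K`, `n ≥ 3`, an index `1 ≤ i ≤ n - 2`, and units `a, b` of `K`,
`U_{n;i}(a) · U_{n;i+1}(a) · U_{n;i}(b) = U_{n;i+1}(b) · U_{n;i}(a) · U_{n;i+1}(a)`:
the braid-relation identity underlying the well-definedness of the Gassner invariant. -/
theorem gassnerU_braid_relation (K : Type*) [CommRing K] (n : ℕ) (hn : 3 ≤ n) (i : ℕ)
    (hi1 : 1 ≤ i) (hi2 : i ≤ n - 2) (a b : Kˣ) :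
    GassnerU K n i (a : K) * GassnerU K n (i + 1) (a : K) * GassnerU K n i (b : K) =
      GassnerU K n (i + 1) (b : K) * GassnerU K n i (a : K) * GassnerU K n (i + 1) (a : K) := by
  have hin : i < n := by omega
  have hin1 : i + 1 < n := by omega
  have hi1' : 1 ≤ i + 1 := by omega
  ext r c
  rw [mul_assoc, mul_assoc]
  simp only [GassnerU_mul_apply hi1 hin, GassnerU_mul_apply hi1' hin1]
  simp only [Nat.sub_add_cancel hi1, Nat.add_sub_cancel,
    eq_false (by omega : ¬(i = i + 1)), eq_false (by omega : ¬(i - 1 = i + 1)),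
    eq_false (by omega : ¬(i + 1 + 1 = i)), eq_false (by omega : ¬(i + 1 = i)),
    eq_self_iff_true, if_true, if_false, add_left_inj]
  split_ifs <;>
    (simp only [GassnerU, Matrix.of_apply, Fin.ext_iff, Fin.val_mk,
        Nat.sub_add_cancel hi1, Nat.add_sub_cancel,
        eq_false (by omega : ¬(i = i + 1)), eq_false (by omega : ¬(i - 1 = i + 1)),
        eq_false (by omega : ¬(i + 1 + 1 = i)), eq_false (by omega : ¬(i + 1 = i)),
        eq_false (by omega : ¬(i - 1 = i)), eq_false (by omega : ¬(i + 1 = i - 1)),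
        eq_false (by omega : ¬(i = i - 1)), eq_false (by omega : ¬(i - 1 + 1 = i - 1)),
        eq_self_iff_true, true_and, and_true, false_and, and_false, if_true, if_false,
        add_left_inj];
      split_ifs <;>
        first
          | ring1
          | ((exfalso;
              try simp only [Fin.ext_iff, Fin.val_mk, not_and, true_implies, not_true,
                imp_false] at *) <;> omega))
end

section
/- Let n ≥ 2 and let B_n be the braid group on n strands, presented by generators σ₁,…,σ_{n−1} and relations σᵢσⱼ = σⱼσᵢ for |i−j| > 1 and σᵢσ_{i+1}σᵢ = σ_{i+1}σᵢσ_{i+1}. Let K = Frac(ℚ[x₁,…,x_n]) and let t_j denote the image of x_j in K. The symmetric group S_n acts on K by field automorphisms permuting the variables (ρ·t_j = t_{ρ(j)}), hence acts on GL_n(K) by applying this automorphism entrywise; form the semidirect product GL_n(K) ⋊ S_n. Then there exists a group homomorphism B_n → GL_n(K) ⋊ S_n sending σᵢ to the pair (U_{n;i}(t_i), (i, i+1)), where (i, i+1) denotes the transposition of i and i+1. -/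
open Matrix

/-- The field `K = Frac(ℚ[x₁,…,x_n])`. -/
abbrev GassnerField (n : ℕ) : Type := FractionRing (MvPolynomial (Fin n) ℚ)

/-- `t_j`, the image of the variable `x_j` in `K = Frac(ℚ[x₁,…,x_n])`. -/
noncomputable def tvar (n : ℕ) (j : Fin n) : GassnerField n :=
  algebraMap (MvPolynomial (Fin n) ℚ) (GassnerField n) (MvPolynomial.X j)

/-- The action of `S_n` on `K = Frac(ℚ[x₁,…,x_n])` by field automorphisms permuting the
variables: `ρ · t_j = t_{ρ(j)}`. -/
noncomputable def permFieldAut (n : ℕ) : Equiv.Perm (Fin n) →* RingAut (GassnerField n) where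
  toFun ρ := IsFractionRing.ringEquivOfRingEquiv
    (MvPolynomial.renameEquiv ℚ ρ).toRingEquiv
  map_one' := by
    apply RingEquiv.toRingHom_injective
    apply IsLocalization.ringHom_ext (nonZeroDivisors (MvPolynomial (Fin n) ℚ))
    ext p : 2 <;>
      simp [RingEquiv.toRingHom_eq_coe, RingHom.comp_apply, RingHom.coe_coe,
        IsFractionRing.ringEquivOfRingEquiv_algebraMap] <;>
      rfl
  map_mul' := by
    intro σ τ
    apply RingEquiv.toRingHom_injective
    apply IsLocalization.ringHom_ext (nonZeroDivisors (MvPolynomial (Fin n) ℚ))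
    have hmul : ∀ (a b : RingAut (GassnerField n)) (x : GassnerField n),
        (a * b) x = a (b x) := fun _ _ _ => rfl
    ext p : 2 <;>
      simp only [RingEquiv.toRingHom_eq_coe, RingHom.comp_apply, RingHom.coe_coe, hmul,
        IsFractionRing.ringEquivOfRingEquiv_algebraMap] <;>
      simp [MvPolynomial.rename_X]

/-- The action of `S_n` on `GL_n(K)` obtained by applying the variable-permuting field
automorphism entrywise. -/
noncomputable def glAut (n : ℕ) :
    Equiv.Perm (Fin n) →* MulAut (GL (Fin n) (GassnerField n)) where
  toFun ρ := Units.mapEquiv ((permFieldAut n ρ).mapMatrix.toMulEquiv)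
  map_one' := by
    ext x
    simp
  map_mul' := by
    intro σ τ
    ext x
    simp

/-- The braid relations: `σᵢσⱼ = σⱼσᵢ` for `|i - j| > 1` and `σᵢσᵢ₊₁σᵢ = σᵢ₊₁σᵢσᵢ₊₁`.
A generator index `p : Fin (n-1)` stands for the generator `σ_{p+1}` of `B_n`. -/
def braidRels (n : ℕ) : Set (FreeGroup (Fin (n - 1))) :=
  {r | ∃ p q : Fin (n - 1),
    ((p.val + 1 < q.val ∨ q.val + 1 < p.val) ∧
      r = FreeGroup.of p * FreeGroup.of q * (FreeGroup.of q * FreeGroup.of p)⁻¹) ∨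
    (q.val = p.val + 1 ∧
      r = FreeGroup.of p * FreeGroup.of q * FreeGroup.of p *
        (FreeGroup.of q * FreeGroup.of p * FreeGroup.of q)⁻¹)}

/-- The braid group `B_n`, presented by generators `σ₁, …, σ_{n-1}` and the braid
relations. -/
abbrev BraidGroup (n : ℕ) := PresentedGroup (braidRels n)

/-! The matrix `U_{n;i}(t)` sends `e_i ↦ (1 - t) e_i + t e_{i+1}` and `e_{i+1} ↦ e_i` and fixes the
other basis vectors. Placing the same block in rows and columns `a, b` for arbitrary indices gives
`M_{ab}(t) = gassnerBlock a b t`, whose inverse is `M_{ba}(t⁻¹)`. Blocks on disjoint index pairs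
commute, and for distinct `a, b, d` evaluation on basis vectors gives the twisted braid identity
`M_{ab}(s) M_{bd}(s) M_{ab}(u) = M_{bd}(u) M_{ab}(s) M_{bd}(s)`.

In `GL_n(K) ⋊ S_n` the permutation part of a factor renames the variables in the matrices to its
right. For the factors `(M_{ab}(t_a), (a b))` and `(M_{bd}(t_b), (b d))` this renaming turns the two
sides of the braid relation into the two sides of that identity with `s = t_a` and `u = t_b`. -/

namespace Matrix

variable {ι K : Type*} [DecidableEq ι] [CommRing K]

def gassnerBlock (a b : ι) (t : K) : Matrix ι ι K :=
  1 + single a a (-t) + single a b 1 + single b a t + single b b (-1)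

theorem gassnerBlock_map {L F : Type*} [CommRing L] [FunLike F K L] [RingHomClass F K L] (f : F)
    (a b : ι) (t : K) :
    (gassnerBlock a b t).map f = gassnerBlock a b (f t) := by
  simp [gassnerBlock, Matrix.map_add, map_single]

variable [Fintype ι]

theorem gassnerBlock_mulVec_single_left (a b : ι) (t : K) :
    gassnerBlock a b t *ᵥ Pi.single a 1 = (1 - t) • Pi.single a 1 + t • Pi.single b 1 := by
  ext i
  simp only [gassnerBlock, mulVec_single_one, col_apply, Pi.add_apply, Pi.smul_apply,
    Pi.single_apply, add_apply, one_apply, single_apply, smul_eq_mul]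
  grind

theorem gassnerBlock_mulVec_single_right (a b : ι) (t : K) :
    gassnerBlock a b t *ᵥ Pi.single b 1 = Pi.single a 1 := by
  ext i
  simp only [gassnerBlock, mulVec_single_one, col_apply, Pi.single_apply, add_apply, one_apply,
    single_apply]
  grind

theorem gassnerBlock_mulVec_single_of_ne {a b k : ι} (ha : k ≠ a) (hb : k ≠ b) (t : K) :
    gassnerBlock a b t *ᵥ Pi.single k 1 = Pi.single k 1 := by
  ext i
  simp only [gassnerBlock, mulVec_single_one, col_apply, Pi.single_apply, add_apply, one_apply,
    single_apply]
  grind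

attribute [local simp] gassnerBlock_mulVec_single_left gassnerBlock_mulVec_single_right
  gassnerBlock_mulVec_single_of_ne mulVec_add mulVec_smul

theorem gassnerBlock_mul_gassnerBlock_of_mul_eq_one (a b : ι) {t u : K} (h : t * u = 1) :
    gassnerBlock a b t * gassnerBlock b a u = 1 := by
  refine ext_of_mulVec_single fun j => ?_
  rw [← mulVec_mulVec, one_mulVec]
  by_cases hja : j = a
  · subst hja; simp [-mulVec_single]
  by_cases hjb : j = b
  · subst hjb
    simp only [gassnerBlock_mulVec_single_left, gassnerBlock_mulVec_single_right, mulVec_add,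
      mulVec_smul, smul_add]
    linear_combination (norm := module) (-h) • Pi.single a 1 + h • Pi.single j 1
  simp [-mulVec_single, *]

theorem gassnerBlock_commute {a b c d : ι} (hac : a ≠ c) (had : a ≠ d) (hbc : b ≠ c)
    (hbd : b ≠ d) (s u : K) : Commute (gassnerBlock a b s) (gassnerBlock c d u) := by
  have := hac.symm; have := had.symm; have := hbc.symm; have := hbd.symm
  refine ext_of_mulVec_single fun j => ?_
  rw [← mulVec_mulVec, ← mulVec_mulVec]
  by_cases hja : j = a
  · subst hja; simp [-mulVec_single, *]
  by_cases hjb : j = b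
  · subst hjb; simp [-mulVec_single, *]
  by_cases hjc : j = c
  · subst hjc; simp [-mulVec_single, *]
  by_cases hjd : j = d
  · subst hjd; simp [-mulVec_single, *]
  simp [-mulVec_single, *]

theorem gassnerBlock_braid {a b d : ι} (hab : a ≠ b) (hbd : b ≠ d) (had : a ≠ d) (s u : K) :
    gassnerBlock a b s * gassnerBlock b d s * gassnerBlock a b u =
      gassnerBlock b d u * gassnerBlock a b s * gassnerBlock b d s := by
  have := hab.symm; have := hbd.symm; have := had.symm
  refine ext_of_mulVec_single fun j => ?_
  simp only [← mulVec_mulVec]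
  by_cases hja : j = a
  · subst hja
    simp only [gassnerBlock_mulVec_single_left, gassnerBlock_mulVec_single_right,
      gassnerBlock_mulVec_single_of_ne, mulVec_add, mulVec_smul, smul_add, ne_eq, not_false_eq_true, *]
    module
  by_cases hjb : j = b
  · subst hjb; simp [-mulVec_single, *]
  by_cases hjd : j = d
  · subst hjd; simp [-mulVec_single, *]
  simp [-mulVec_single, *]

def gassnerUnit (a b : ι) (t : Kˣ) : GL ι K where
  val := gassnerBlock a b (t : K)
  inv := gassnerBlock b a (↑t⁻¹ : K)
  val_inv := gassnerBlock_mul_gassnerBlock_of_mul_eq_one a b t.mul_inv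
  inv_val := gassnerBlock_mul_gassnerBlock_of_mul_eq_one b a t.inv_mul

@[simp]
theorem coe_gassnerUnit (a b : ι) (t : Kˣ) :
    ((gassnerUnit a b t : GL ι K) : Matrix ι ι K) = gassnerBlock a b (t : K) :=
  rfl

end Matrix

namespace BraidGroup

variable {n : ℕ} {H : Type*} [Group H] (f : Fin (n - 1) → H)
  (hcomm : ∀ p q : Fin (n - 1), p.val + 1 < q.val → Commute (f p) (f q))
  (hbraid : ∀ p q : Fin (n - 1), q.val = p.val + 1 → f p * f q * f p = f q * f p * f q)

def lift : BraidGroup n →* H :=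
  PresentedGroup.toGroup (f := f) <| by
    rintro r ⟨p, q, ⟨hpq | hqp, rfl⟩ | ⟨hq, rfl⟩⟩ <;>
      simp only [map_mul, map_inv, FreeGroup.lift_apply_of, mul_inv_eq_one]
    exacts [(hcomm p q hpq).eq, (hcomm q p hqp).eq.symm, hbraid p q hq]

theorem lift_of (i : Fin (n - 1)) :
    lift f hcomm hbraid (PresentedGroup.of i) = f i :=
  PresentedGroup.toGroup.of _

end BraidGroup

theorem gassnerU_eq_gassnerBlock {K : Type*} [CommRing K] {n : ℕ} (a b : Fin n)
    (hab : b.val = a.val + 1) (t : K) :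
    GassnerU K n (a.val + 1) t = gassnerBlock a b t := by
  ext r c
  simp only [GassnerU, gassnerBlock, of_apply, Matrix.add_apply, Matrix.one_apply,
    Matrix.single_apply, Fin.ext_iff]
  grind

theorem tvar_ne_zero (n : ℕ) (j : Fin n) : tvar n j ≠ 0 :=
  (IsFractionRing.to_map_eq_zero_iff.not).2 (MvPolynomial.X_ne_zero j)

theorem permFieldAut_tvar (n : ℕ) (ρ : Equiv.Perm (Fin n)) (j : Fin n) :
    permFieldAut n ρ (tvar n j) = tvar n (ρ j) := by
  simp [permFieldAut, tvar]

noncomputable def tvarUnit (n : ℕ) (j : Fin n) : (GassnerField n)ˣ :=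
  Units.mk0 (tvar n j) (tvar_ne_zero n j)

theorem glAut_gassnerUnit (n : ℕ) (ρ : Equiv.Perm (Fin n)) (a b j : Fin n) :
    glAut n ρ (gassnerUnit a b (tvarUnit n j)) = gassnerUnit a b (tvarUnit n (ρ j)) := by
  ext : 1
  simp [glAut, tvarUnit, gassnerBlock_map, permFieldAut_tvar]

noncomputable def gassnerGen (n : ℕ) (a b : Fin n) :
    GL (Fin n) (GassnerField n) ⋊[glAut n] Equiv.Perm (Fin n) :=
  ⟨gassnerUnit a b (tvarUnit n a), Equiv.swap a b⟩

theorem gassnerGen_commute {n : ℕ} {a b c d : Fin n} (hac : a ≠ c) (had : a ≠ d) (hbc : b ≠ c)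
    (hbd : b ≠ d) : Commute (gassnerGen n a b) (gassnerGen n c d) := by
  have hswap_c : Equiv.swap a b c = c := Equiv.swap_apply_of_ne_of_ne hac.symm hbc.symm
  have hswap_a : Equiv.swap c d a = a := Equiv.swap_apply_of_ne_of_ne hac had
  refine SemidirectProduct.ext ?_ ?_
  · ext : 1
    simp only [gassnerGen, SemidirectProduct.mul_left, glAut_gassnerUnit, hswap_c, hswap_a,
      Units.val_mul, coe_gassnerUnit]
    exact gassnerBlock_commute hac had hbc hbd _ _
  · ext x
    simp only [gassnerGen, SemidirectProduct.mul_right, Equiv.Perm.mul_apply, Equiv.swap_apply_def]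
    grind

theorem gassnerGen_braid {n : ℕ} {a b d : Fin n} (hab : a ≠ b) (hbd : b ≠ d) (had : a ≠ d) :
    gassnerGen n a b * gassnerGen n b d * gassnerGen n a b =
      gassnerGen n b d * gassnerGen n a b * gassnerGen n b d := by
  refine SemidirectProduct.ext ?_ ?_
  · ext : 1
    simp only [gassnerGen, SemidirectProduct.mul_left, SemidirectProduct.mul_right, map_mul,
      MulAut.mul_apply, glAut_gassnerUnit, Units.val_mul, coe_gassnerUnit, Equiv.swap_apply_left,
      Equiv.swap_apply_right, Equiv.swap_apply_of_ne_of_ne hab had]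
    exact gassnerBlock_braid hab hbd had _ _
  · ext x
    simp only [gassnerGen, SemidirectProduct.mul_right, Equiv.Perm.mul_apply, Equiv.swap_apply_def]
    grind

noncomputable def gassnerSigma (n : ℕ) (p : Fin (n - 1)) :
    GL (Fin n) (GassnerField n) ⋊[glAut n] Equiv.Perm (Fin n) :=
  gassnerGen n ⟨p, by omega⟩ ⟨p + 1, by omega⟩

theorem gassnerSigma_commute {n : ℕ} {p q : Fin (n - 1)} (h : p.val + 1 < q.val) :
    Commute (gassnerSigma n p) (gassnerSigma n q) :=
  gassnerGen_commute (by simp [Fin.ext_iff]; omega) (by simp [Fin.ext_iff]; omega)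
    (by simp [Fin.ext_iff]; omega) (by simp [Fin.ext_iff]; omega)

theorem gassnerSigma_braid {n : ℕ} {p q : Fin (n - 1)} (h : q.val = p.val + 1) :
    gassnerSigma n p * gassnerSigma n q * gassnerSigma n p =
      gassnerSigma n q * gassnerSigma n p * gassnerSigma n q := by
  have hpq : (⟨q, by omega⟩ : Fin n) = ⟨p + 1, by omega⟩ := Fin.ext h
  simp only [gassnerSigma, hpq]
  exact gassnerGen_braid (by simp [Fin.ext_iff]) (by simp [Fin.ext_iff]; omega)
    (by simp [Fin.ext_iff]; omega)

/-- There exists a group homomorphism `B_n → GL_n(K) ⋊ S_n` (the Gassner invariant) sending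
`σᵢ` to the pair `(U_{n;i}(t_i), (i, i+1))`. -/
theorem gassner_invariant_exists (n : ℕ) :
    ∃ Φ : BraidGroup n →*
        SemidirectProduct (GL (Fin n) (GassnerField n)) (Equiv.Perm (Fin n)) (glAut n),
      ∀ i : Fin (n - 1),
        ((Φ (PresentedGroup.of i)).left : Matrix (Fin n) (Fin n) (GassnerField n)) =
            GassnerU (GassnerField n) n (i.val + 1)
              (tvar n ⟨i.val, by have := i.isLt; omega⟩) ∧
          (Φ (PresentedGroup.of i)).right =
            Equiv.swap (⟨i.val, by have := i.isLt; omega⟩ : Fin n)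
              ⟨i.val + 1, by have := i.isLt; omega⟩ := by
  refine ⟨BraidGroup.lift (gassnerSigma n) (fun _ _ => gassnerSigma_commute)
    (fun _ _ => gassnerSigma_braid), fun i => ?_⟩
  rw [BraidGroup.lift_of]
  exact ⟨(gassnerU_eq_gassnerBlock _ _ rfl _).symm, rfl⟩
end

section
/- Let K be a field, n ≥ 2, t₁,…,t_n ∈ K with t_j ≠ 0 and t_j ≠ 1 for all j, and let c : K → K be a ring homomorphism with c(t_j) = t_j⁻¹ for all j. Then for every index i with 1 ≤ i ≤ n−1, the matrix γ = U_{n;i}(t_i) satisfies Ω((i,i+1))·γ⁻¹ = γ̄ᵀ·Ω(ι), where (i,i+1) is the transposition of i and i+1. -/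
open Matrix

/-- `Ω(τ)`: the `n × n` matrix with diagonal entries `(1 - t (τ r))⁻¹`, entries below the
diagonal equal to `1`, and entries above the diagonal equal to `0`. -/
def GassnerOmega {K : Type*} [Field K] {n : ℕ} (t : Fin n → K) (τ : Equiv.Perm (Fin n)) :
    Matrix (Fin n) (Fin n) K :=
  Matrix.of fun r c => if r = c then (1 - t (τ r))⁻¹ else if c < r then 1 else 0

lemma sum_decomp_right {K : Type*} [Field K] {n : ℕ} (A : Matrix (Fin n) (Fin n) K)
    (r c a b : Fin n) (f g : K) :
    ∑ k, A r k * ((if k = c then (1:K) else 0) + (if k = a then f else 0) + (if k = b then g else 0))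
      = A r c + A r a * f + A r b * g := by
  simp [mul_add, Finset.sum_add_distrib, mul_ite, mul_zero, mul_one]

lemma sum_decomp_left {K : Type*} [Field K] {n : ℕ} (D : Matrix (Fin n) (Fin n) K)
    (r c a b : Fin n) (p q : K) :
    ∑ k, ((if k = r then (1:K) else 0) + (if k = a then p else 0) + (if k = b then q else 0)) * D k c
      = D r c + p * D a c + q * D b c := by
  simp [add_mul, Finset.sum_add_distrib, ite_mul, zero_mul, one_mul]

set_option maxHeartbeats 4000000 in
lemma gassner_key {K : Type*} [Field K] {n : ℕ} (hn : 2 ≤ n)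
    (t : Fin n → K) (ht0 : ∀ j, t j ≠ 0) (ht1 : ∀ j, t j ≠ 1)
    (c : K →+* K) (hc : ∀ j, c (t j) = (t j)⁻¹)
    (i : ℕ) (hi1 : 1 ≤ i) (hi2 : i ≤ n - 1) (a b : Fin n)
    (haval : a.val = i - 1) (hbval : b.val = i) :
    GassnerOmega t (Equiv.swap a b) * (GassnerU K n i (t a))⁻¹ =
      ((GassnerU K n i (t a)).map c)ᵀ * GassnerOmega t 1 := by
  have hab : a ≠ b := by simp [Fin.ext_iff, haval, hbval]; omega
  have hba : b ≠ a := Ne.symm hab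
  have haltb : a < b := by simp [Fin.lt_def, haval, hbval]; omega
  have hnba : ¬ b < a := lt_asymm haltb
  have hs0 : t a ≠ 0 := ht0 a
  have hs1 : (1 : K) - t a ≠ 0 := sub_ne_zero.2 (Ne.symm (ht1 a))
  have hu1 : (1 : K) - t b ≠ 0 := sub_ne_zero.2 (Ne.symm (ht1 b))
  have hcs : c (t a) = (t a)⁻¹ := hc a
  have hU : ∀ r k : Fin n, GassnerU K n i (t a) r k =
      (if r = a then (if k = a then 1 - t a else if k = b then 1 else 0)
       else if r = b then (if k = a then t a else 0)
       else if r = k then 1 else 0) := by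
    intro r k
    simp only [GassnerU, Matrix.of_apply, Fin.ext_iff, haval, hbval]
    split_ifs <;> first | rfl | omega
  set V : Matrix (Fin n) (Fin n) K := Matrix.of fun r k =>
      if r = a then (if k = a then 0 else if k = b then (t a)⁻¹ else 0)
      else if r = b then (if k = a then 1 else if k = b then 1 - (t a)⁻¹ else 0)
      else if r = k then 1 else 0 with hVdef
  have hV : ∀ k x : Fin n, V k x =
      (if k = x then 1 else 0)
      + (if k = a then (if x = a then -1 else if x = b then (t a)⁻¹ else 0) else 0)
      + (if k = b then (if x = a then 1 else if x = b then -(t a)⁻¹ else 0) else 0) := by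
    intro k x
    simp only [hVdef, Matrix.of_apply]
    split_ifs <;>
      first
        | ring1
        | (exfalso; omega)
  clear hVdef
  clear_value V
  have hUV : GassnerU K n i (t a) * V = 1 := by
    ext r x
    rw [Matrix.mul_apply]
    simp only [hV]
    rw [sum_decomp_right]
    simp only [hU, Matrix.one_apply, eq_self_iff_true, if_true, hab, hba, if_false]
    split_ifs <;>
      first
        | ring1
        | (exfalso; omega)
        | (field_simp <;> ring1)
  rw [Matrix.inv_eq_right_inv hUV]
  have hM : ∀ r k : Fin n, ((GassnerU K n i (t a)).map c)ᵀ r k =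
      (if k = r then 1 else 0)
      + (if k = a then (if r = a then -(t a)⁻¹ else if r = b then 1 else 0) else 0)
      + (if k = b then (if r = a then (t a)⁻¹ else if r = b then -1 else 0) else 0) := by
    intro r k
    simp only [Matrix.transpose_apply, Matrix.map_apply, hU]
    split_ifs <;>
      first
        | (simp only [_root_.map_sub, _root_.map_one, _root_.map_zero, hcs]; ring1)
        | (exfalso; omega)
  ext r x
  rw [Matrix.mul_apply, Matrix.mul_apply]
  simp only [hV, hM]
  rw [sum_decomp_right, sum_decomp_left]
  simp only [GassnerOmega, Matrix.of_apply, Equiv.swap_apply_def, Equiv.Perm.coe_one, id_eq]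
  split_ifs <;> first | (exfalso; omega) | ring1 | (subst_vars; field_simp <;> ring1)


/-- Unitarity property for a positive generator: for `γ = U_{n;i}(t_i)` one has
`Ω((i,i+1)) · γ⁻¹ = γ̄ᵀ · Ω(ι)`, where `γ̄` is the entrywise application of the ring
homomorphism `c` (which satisfies `c (t_j) = t_j⁻¹`). -/
theorem gassner_unitarity_pos_generator {K : Type*} [Field K] (n : ℕ) (hn : 2 ≤ n)
    (t : Fin n → K) (ht0 : ∀ j, t j ≠ 0) (ht1 : ∀ j, t j ≠ 1)
    (c : K →+* K) (hc : ∀ j, c (t j) = (t j)⁻¹)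
    (i : ℕ) (hi1 : 1 ≤ i) (hi2 : i ≤ n - 1) :
    GassnerOmega t (Equiv.swap (⟨i - 1, by omega⟩ : Fin n) ⟨i, by omega⟩) *
        (GassnerU K n i (t ⟨i - 1, by omega⟩))⁻¹ =
      ((GassnerU K n i (t ⟨i - 1, by omega⟩)).map c)ᵀ * GassnerOmega t 1 := by
  exact gassner_key hn t ht0 ht1 c hc i hi1 hi2 _ _ rfl rfl
end

section
/- Let K be a field, n ≥ 2, t₁,…,t_n ∈ K with t_j ≠ 0 and t_j ≠ 1 for all j, and let c : K → K be a ring homomorphism with c(t_j) = t_j⁻¹ for all j. Then for every index i with 1 ≤ i ≤ n−1, the matrix γ = U_{n;i}(t_{i+1})⁻¹ satisfies Ω((i,i+1))·γ⁻¹ = γ̄ᵀ·Ω(ι), where (i,i+1) is the transposition of i and i+1. -/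
open Matrix

/-!
`U_{n;i}(s)` is the identity outside a `2 × 2` block on the adjacent indices `i, i+1`, and
block-embedded matrices multiply, invert, transpose and conjugate blockwise. Hence
`γ⁻¹ = U_{n;i}(s)` and, as `c s = s⁻¹`, `γ̄ᵀ` is the block matrix `((0, 1), (s, 1 - s))`.
Right multiplication by `U_{n;i}(s)` only changes columns `i, i+1` of `Ω((i,i+1))`, left
multiplication by `γ̄ᵀ` only rows `i, i+1` of `Ω(ι)`; because the two indices are adjacent,
a direct entrywise comparison (using `1 - t_{i+1} ≠ 0`) shows the results agree.
-/
namespace Matrix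

variable {ι R : Type*} [DecidableEq ι]

/-- The identity matrix with the `2 × 2` block of rows and columns `p, q` (in this order) replaced
by `B` (for `p = q` only the entry `B 0 0` is used). -/
def twoBlock [Zero R] [One R] (p q : ι) (B : Matrix (Fin 2) (Fin 2) R) : Matrix ι ι R :=
  of fun r j =>
    if r = p ∧ j = p then B 0 0 else if r = p ∧ j = q then B 0 1
    else if r = q ∧ j = p then B 1 0 else if r = q ∧ j = q then B 1 1
    else (1 : Matrix ι ι R) r j

variable {p q : ι}

theorem mul_twoBlock_apply [Fintype ι] [Semiring R] (hpq : p ≠ q) (M : Matrix ι ι R)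
    (B : Matrix (Fin 2) (Fin 2) R) (r j : ι) :
    (M * twoBlock p q B) r j =
      if j = p then M r p * B 0 0 + M r q * B 1 0
      else if j = q then M r p * B 0 1 + M r q * B 1 1 else M r j := by
  rw [mul_apply]
  split_ifs with hjp hjq
  · rw [Finset.sum_eq_add_of_mem p q (by simp) (by simp) hpq]
    · simp [twoBlock, hjp, hpq.symm]
    · intro k _ hk; simp [twoBlock, hjp, hk.1, hk.2, one_apply]
  · rw [Finset.sum_eq_add_of_mem p q (by simp) (by simp) hpq]
    · simp [twoBlock, hjq, hpq.symm]
    · intro k _ hk; simp [twoBlock, hjq, hk.1, hk.2, one_apply]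
  · rw [Finset.sum_eq_single j]
    · simp [twoBlock, hjq, hjp]
    · intro k _ hk; simp [twoBlock, hjq, hjp, one_apply, hk]
    · simp

theorem twoBlock_mul_apply [Fintype ι] [Semiring R] (hpq : p ≠ q) (M : Matrix ι ι R)
    (B : Matrix (Fin 2) (Fin 2) R) (r j : ι) :
    (twoBlock p q B * M) r j =
      if r = p then B 0 0 * M p j + B 0 1 * M q j
      else if r = q then B 1 0 * M p j + B 1 1 * M q j else M r j := by
  rw [mul_apply]
  split_ifs with hrp hrq
  · rw [Finset.sum_eq_add_of_mem p q (by simp) (by simp) hpq]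
    · simp [twoBlock, hrp, hpq.symm]
    · intro k _ hk; simp [twoBlock, hrp, hk.1, hk.2, one_apply, Ne.symm hk.1]
  · rw [Finset.sum_eq_add_of_mem p q (by simp) (by simp) hpq]
    · simp [twoBlock, hrq, hpq.symm]
    · intro k _ hk; simp [twoBlock, hrq, hk.1, hk.2, one_apply, Ne.symm hk.2]
  · rw [Finset.sum_eq_single r]
    · simp [twoBlock, hrq, hrp]
    · intro k _ hk; simp [twoBlock, hrq, hrp, one_apply, hk.symm]
    · simp

theorem twoBlock_mul_twoBlock [Fintype ι] [Semiring R] (hpq : p ≠ q)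
    (A B : Matrix (Fin 2) (Fin 2) R) :
    twoBlock p q A * twoBlock p q B = twoBlock p q (A * B) := by
  ext r j
  rw [mul_twoBlock_apply hpq]
  by_cases hrp : r = p <;> by_cases hrq : r = q <;>
    by_cases hjp : j = p <;> by_cases hjq : j = q <;>
      simp_all [twoBlock, mul_apply, Fin.sum_univ_two, one_apply, Ne.symm hpq]

theorem twoBlock_one [Zero R] [One R] : twoBlock p q (1 : Matrix (Fin 2) (Fin 2) R) = 1 := by
  ext r j
  by_cases hrp : r = p <;> by_cases hrq : r = q <;>
    by_cases hjp : j = p <;> by_cases hjq : j = q <;>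
      simp_all [twoBlock, one_apply]

theorem transpose_twoBlock [Zero R] [One R] (B : Matrix (Fin 2) (Fin 2) R) :
    (twoBlock p q B)ᵀ = twoBlock p q Bᵀ := by
  ext r j
  by_cases hrp : r = p <;> by_cases hrq : r = q <;>
    by_cases hjp : j = p <;> by_cases hjq : j = q <;>
      simp_all [twoBlock, one_apply, eq_comm]

theorem map_twoBlock {S : Type*} [NonAssocSemiring R] [NonAssocSemiring S] (f : R →+* S)
    (B : Matrix (Fin 2) (Fin 2) R) :
    (twoBlock p q B).map f = twoBlock p q (B.map f) := by
  ext r j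
  simp only [twoBlock, map_apply, of_apply]
  split_ifs <;> simp [one_apply]

theorem inv_twoBlock [Fintype ι] [CommRing R] (hpq : p ≠ q) {A B : Matrix (Fin 2) (Fin 2) R}
    (h : A * B = 1) : (twoBlock p q A)⁻¹ = twoBlock p q B :=
  inv_eq_right_inv (by rw [twoBlock_mul_twoBlock hpq, h, twoBlock_one])

end Matrix

theorem gassnerOmega_swap_mul_twoBlock {K : Type*} [Field K] {n : ℕ} (t : Fin n → K)
    {p q : Fin n} (hpq : p.val + 1 = q.val) (hq : t q ≠ 1) :
    GassnerOmega t (Equiv.swap p q) * twoBlock p q !![1 - t q, 1; t q, 0] =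
      twoBlock p q !![0, 1; t q, 1 - t q] * GassnerOmega t 1 := by
  have hne : p ≠ q := by rw [Fin.ne_iff_vne]; omega
  have hq' : 1 - t q ≠ 0 := sub_ne_zero.mpr hq.symm
  ext r j
  rw [mul_twoBlock_apply hne, twoBlock_mul_apply hne]
  simp only [GassnerOmega, of_apply, Equiv.swap_apply_def, Equiv.Perm.one_apply, Fin.ext_iff,
    Fin.lt_def, cons_val', cons_val_zero, cons_val_one, empty_val', cons_val_fin_one]
  split_ifs <;> first | omega | (field_simp <;> ring1)

theorem gassnerU_eq_twoBlock {K : Type*} [CommRing K] {n i : ℕ} (hi : 1 ≤ i) (hin : i < n)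
    (s : K) :
    GassnerU K n i s = twoBlock ⟨i - 1, by omega⟩ ⟨i, hin⟩ !![1 - s, 1; s, 0] := by
  ext r j
  simp only [GassnerU, twoBlock, of_apply, Fin.ext_iff, one_apply]
  split_ifs <;> first | rfl | omega

theorem gassnerBlock_mul_inv {K : Type*} [Field K] {s : K} (hs : s ≠ 0) :
    !![1 - s, 1; s, 0] * !![0, s⁻¹; 1, 1 - s⁻¹] = 1 := by
  ext a b
  fin_cases a <;> fin_cases b <;> simp [hs]
  field_simp
  ring

/-- Unitarity property for a negative generator: for `γ = U_{n;i}(t_{i+1})⁻¹` one has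
`Ω((i,i+1)) · γ⁻¹ = γ̄ᵀ · Ω(ι)`, where `γ̄` is the entrywise application of the ring
homomorphism `c` (which satisfies `c (t_j) = t_j⁻¹`). -/
theorem gassner_unitarity_neg_generator {K : Type*} [Field K] (n : ℕ)
    (t : Fin n → K) (ht0 : ∀ j, t j ≠ 0) (ht1 : ∀ j, t j ≠ 1)
    (c : K →+* K) (hc : ∀ j, c (t j) = (t j)⁻¹)
    (i : ℕ) (hi1 : 1 ≤ i) (hi2 : i ≤ n - 1) :
    GassnerOmega t (Equiv.swap (⟨i - 1, by omega⟩ : Fin n) ⟨i, by omega⟩) *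
        ((GassnerU K n i (t ⟨i, by omega⟩))⁻¹)⁻¹ =
      (((GassnerU K n i (t ⟨i, by omega⟩))⁻¹).map c)ᵀ * GassnerOmega t 1 := by
  set p : Fin n := ⟨i - 1, by omega⟩
  set q : Fin n := ⟨i, by omega⟩
  have hpq : p.val + 1 = q.val := by simp only [p, q]; omega
  have hne : p ≠ q := by rw [Fin.ne_iff_vne]; omega
  have hB := gassnerBlock_mul_inv (ht0 q)
  have hconj : (!![0, (t q)⁻¹; 1, 1 - (t q)⁻¹].map c)ᵀ = !![0, 1; t q, 1 - t q] := by
    ext a b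
    fin_cases a <;> fin_cases b <;> simp [hc]
  rw [gassnerU_eq_twoBlock hi1 (by omega), inv_twoBlock hne hB,
    inv_twoBlock hne (mul_eq_one_comm.mp hB), map_twoBlock, transpose_twoBlock, hconj]
  exact gassnerOmega_swap_mul_twoBlock t hpq (ht1 q)
end

section
/- Let K be a field, n ≥ 2, t₁,…,t_n ∈ K with t_j ≠ 0 and t_j ≠ 1 for all j, and let c : K → K be a ring homomorphism with c(t_j) = t_j⁻¹ for all j and c∘c = id. Write Ω = Ω(ι). If γ is an invertible n×n matrix over K satisfying Ω·γ⁻¹ = γ̄ᵀ·Ω, then also Ω̄ᵀ·γ⁻¹ = γ̄ᵀ·Ω̄ᵀ, and consequently for all a, b ∈ K the matrix Ψ_{a,b} = a·Ω + b·Ω̄ᵀ satisfies Ψ_{a,b}·γ⁻¹ = γ̄ᵀ·Ψ_{a,b}. -/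
open Matrix

/-- With `Ω = Ω(ι)`, if an invertible matrix `γ` satisfies `Ω·γ⁻¹ = γ̄ᵀ·Ω` (where the bar is
the entrywise application of the involutive ring homomorphism `c`, satisfying
`c (t_j) = t_j⁻¹`), then also `Ω̄ᵀ·γ⁻¹ = γ̄ᵀ·Ω̄ᵀ`, and consequently for all `a, b : K` the
matrix `Ψ_{a,b} = a·Ω + b·Ω̄ᵀ` satisfies `Ψ_{a,b}·γ⁻¹ = γ̄ᵀ·Ψ_{a,b}`. -/
theorem gassner_unitarity_psi {K : Type*} [Field K] (n : ℕ) (hn : 2 ≤ n)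
    (t : Fin n → K) (ht0 : ∀ j, t j ≠ 0) (ht1 : ∀ j, t j ≠ 1)
    (c : K →+* K) (hc : ∀ j, c (t j) = (t j)⁻¹) (hcc : ∀ x, c (c x) = x)
    (γ : Matrix (Fin n) (Fin n) K) (hγ : IsUnit γ)
    (h : GassnerOmega t 1 * γ⁻¹ = (γ.map c)ᵀ * GassnerOmega t 1) :
    ((GassnerOmega t 1).map c)ᵀ * γ⁻¹ = (γ.map c)ᵀ * ((GassnerOmega t 1).map c)ᵀ ∧
      ∀ a b : K,
        (a • GassnerOmega t 1 + b • ((GassnerOmega t 1).map c)ᵀ) * γ⁻¹ =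
          (γ.map c)ᵀ * (a • GassnerOmega t 1 + b • ((GassnerOmega t 1).map c)ᵀ) := by
  set Ω := GassnerOmega t 1 with hΩ
  have hmapmap : ∀ M : Matrix (Fin n) (Fin n) K, (M.map c).map c = M := by
    intro M; ext i j; simp [Matrix.map_apply, hcc]
  -- apply map c to h
  have h1 : Ω.map c * (γ⁻¹).map c = γᵀ * Ω.map c := by
    have := congrArg (Matrix.map · (c : K → K)) h
    simpa [Matrix.map_mul, Matrix.transpose_map, hmapmap] using this
  -- transpose
  have h2 : ((γ⁻¹).map c)ᵀ * (Ω.map c)ᵀ = (Ω.map c)ᵀ * γ := by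
    have := congrArg Matrix.transpose h1
    simpa [Matrix.transpose_mul] using this
  have hinv1 : (γ.map c)ᵀ * ((γ⁻¹).map c)ᵀ = 1 := by
    rw [← Matrix.transpose_mul, ← Matrix.map_mul, Matrix.nonsing_inv_mul γ
      ((Matrix.isUnit_iff_isUnit_det γ).mp hγ)]
    simp
  have hγγ : γ * γ⁻¹ = 1 :=
    Matrix.mul_nonsing_inv γ ((Matrix.isUnit_iff_isUnit_det γ).mp hγ)
  have key : (Ω.map c)ᵀ * γ⁻¹ = (γ.map c)ᵀ * (Ω.map c)ᵀ := by
    calc (Ω.map c)ᵀ * γ⁻¹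
        = (γ.map c)ᵀ * ((γ⁻¹).map c)ᵀ * (Ω.map c)ᵀ * γ⁻¹ := by rw [hinv1, Matrix.one_mul]
      _ = (γ.map c)ᵀ * (((γ⁻¹).map c)ᵀ * (Ω.map c)ᵀ) * γ⁻¹ := by rw [Matrix.mul_assoc ((γ.map c)ᵀ)]
      _ = (γ.map c)ᵀ * ((Ω.map c)ᵀ * γ) * γ⁻¹ := by rw [h2]
      _ = (γ.map c)ᵀ * (Ω.map c)ᵀ * (γ * γ⁻¹) := by
            rw [Matrix.mul_assoc, Matrix.mul_assoc, Matrix.mul_assoc]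
      _ = (γ.map c)ᵀ * (Ω.map c)ᵀ := by rw [hγγ, Matrix.mul_one]
  refine ⟨key, fun a b => ?_⟩
  rw [Matrix.add_mul, Matrix.mul_add, Matrix.smul_mul, Matrix.smul_mul,
    Matrix.mul_smul, Matrix.mul_smul, h, key]
end

section
/- Let K be a commutative ring, n ≥ 2, and t₁,…,t_n units of K. For all distinct indices i, j, k in {1,…,n}, the matrices U_{ij} satisfy U_{ij}·U_{ik}·U_{jk} = U_{jk}·U_{ik}·U_{ij}. -/
/-- `Uij t i j` is the `n × n` matrix over `K` that equals the identity matrix except that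
its entry in row `i`, column `j` is `1 - t i` and its entry in row `j`, column `j` is `t i`
(the identity with the `2 × 2` block in rows `i, j` and columns `i, j` replaced by
`((1, 1 - t_i), (0, t_i))`). -/
def GassnerUij {K : Type*} [CommRing K] {n : ℕ} (t : Fin n → K) (i j : Fin n) :
    Matrix (Fin n) (Fin n) K :=
  Matrix.of fun r c =>
    if r = i ∧ c = j then 1 - t i
    else if r = j ∧ c = j then t i
    else if r = c then 1 else 0

/-!
Write `U_{ij} = 1 + (1 - tᵢ) N_{ij}` with `N_{ij} = E_{ij} - E_{jj} = (eᵢ - eⱼ) eⱼᵀ`. Products of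
the `N`'s are again combinations of `N`'s, and for distinct `i, j, k` the only nonzero ones
occurring are `N_{ij} N_{jk} = N_{ik} - N_{jk}`, `N_{ik} N_{jk} = -N_{ik}` and
`N_{jk} N_{ik} = -N_{jk}`. With `a = 1 - tᵢ`, `b = 1 - tⱼ` both sides therefore expand to
`1 + a N_{ij} + a N_{ik} + b N_{jk} - a b N_{jk}`.
-/

namespace Matrix

variable {ι R : Type*} [DecidableEq ι] [Ring R]

def gassnerNil (i j : ι) : Matrix ι ι R := single i j 1 - single j j 1

@[simp]
theorem gassnerNil_self (i : ι) : (gassnerNil i i : Matrix ι ι R) = 0 := sub_self _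

theorem gassnerNil_mul_gassnerNil [Fintype ι] (i j k l : ι) :
    (gassnerNil i j * gassnerNil k l : Matrix ι ι R) =
      (if j = k then gassnerNil i l - gassnerNil j l else 0) -
        if j = l then gassnerNil i j else 0 := by
  unfold gassnerNil
  simp only [mul_sub, sub_mul]
  by_cases hjk : j = k <;> by_cases hjl : j = l <;> subst_vars <;>
    simp [single_mul_single_of_ne, *, Ne.symm]

end Matrix

open Matrix

theorem gassnerUij_eq_one_add_smul_gassnerNil {K : Type*} [CommRing K] {n : ℕ} (t : Fin n → K)
    {i j : Fin n} (hij : i ≠ j) : GassnerUij t i j = 1 + (1 - t i) • gassnerNil i j := by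
  ext r c
  simp only [GassnerUij, gassnerNil, of_apply, Matrix.add_apply, Matrix.smul_apply,
    Matrix.sub_apply, one_apply, single_apply, smul_eq_mul]
  grind

theorem gassnerUij_braid_general (K : Type*) [CommRing K] (n : ℕ) (t : Fin n → Kˣ)
    (i j k : Fin n) (hij : i ≠ j) (hik : i ≠ k) (hjk : j ≠ k) :
    GassnerUij (fun l => (t l : K)) i j * GassnerUij (fun l => (t l : K)) i k *
        GassnerUij (fun l => (t l : K)) j k =
      GassnerUij (fun l => (t l : K)) j k * GassnerUij (fun l => (t l : K)) i k *
        GassnerUij (fun l => (t l : K)) i j := by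
  simp only [gassnerUij_eq_one_add_smul_gassnerNil _ hij,
    gassnerUij_eq_one_add_smul_gassnerNil _ hik, gassnerUij_eq_one_add_smul_gassnerNil _ hjk,
    mul_add, add_mul, one_mul, mul_one, mul_smul_comm, smul_mul_assoc, neg_mul,
    gassnerNil_mul_gassnerNil, gassnerNil_self, hjk, hij.symm, hik.symm, hjk.symm,
    if_true, if_false, sub_zero, zero_sub, smul_zero, add_zero]
  module

/-- For distinct indices `i, j, k`, the matrices `U_{ij}` of the Gassner representation of
pure v/w-braids satisfy `U_{ij}·U_{ik}·U_{jk} = U_{jk}·U_{ik}·U_{ij}`. -/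
theorem gassnerUij_braid (K : Type*) [CommRing K] (n : ℕ) (hn : 2 ≤ n) (t : Fin n → Kˣ)
    (i j k : Fin n) (hij : i ≠ j) (hik : i ≠ k) (hjk : j ≠ k) :
    GassnerUij (fun l => (t l : K)) i j * GassnerUij (fun l => (t l : K)) i k *
        GassnerUij (fun l => (t l : K)) j k =
      GassnerUij (fun l => (t l : K)) j k * GassnerUij (fun l => (t l : K)) i k *
        GassnerUij (fun l => (t l : K)) i j :=
  gassnerUij_braid_general K n t i j k hij hik hjk
end
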